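/- For every integer n ≥ 2, the sum over k from 2 to n of H_{n−k}/(k−1) equals H_{n+1}^2 − H_{n+1}^{(2)} − (2(2n+1)/(n(n+1)))·H_{n+1} + 2(3n^2+3n+1)/(n^2(n+1)^2). -/

import Mathlib

/-!
Writing `H (i + 1) = H i + 1 / (i + 1)` and splitting `1 / ((i + 1) (m - i))` into partial fractions,
the convolution `∑_{i < m} H_i / (m - i)` grows by `2 H_m / (m + 1)` from `m` to `m + 1`, exactly as
`H_m ^ 2 - H_m^{(2)}` does; hence the two agree. The left side of the theorem is this convolution at
`m = n - 1`, and the right side is `H_{n-1} ^ 2 - H_{n-1}^{(2)}` rewritten in terms of `H_{n+1}`.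
-/

def H (n : ℕ) : ℚ := ∑ k ∈ Finset.range n, 1 / ((k : ℚ) + 1)

def H2 (n : ℕ) : ℚ := ∑ k ∈ Finset.range n, 1 / ((k : ℚ) + 1) ^ 2

open Finset

lemma H_succ (n : ℕ) : H (n + 1) = H n + 1 / ((n : ℚ) + 1) := by
  simp [H, sum_range_succ]

lemma H2_succ (n : ℕ) : H2 (n + 1) = H2 n + 1 / ((n : ℚ) + 1) ^ 2 := by
  simp [H2, sum_range_succ]

lemma sum_range_one_div_sub (m : ℕ) : ∑ i ∈ range m, 1 / ((m : ℚ) - i) = H m := by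
  rw [H, ← sum_range_reflect]
  refine sum_congr rfl fun i hi => ?_
  rw [Nat.cast_sub (by simp at hi; omega), Nat.cast_sub (by simp at hi; omega)]
  ring_nf

lemma H_succ_div_sub {m i : ℕ} (hi : i < m) :
    H (i + 1) / ((m : ℚ) - i) =
      H i / ((m : ℚ) - i) + 1 / ((m : ℚ) + 1) * (1 / ((i : ℚ) + 1) + 1 / ((m : ℚ) - i)) := by
  have hmi : (m : ℚ) - i ≠ 0 := sub_ne_zero.mpr (by exact_mod_cast hi.ne')
  rw [H_succ]
  field_simp
  ring

lemma sum_range_H_div_sub (m : ℕ) : ∑ i ∈ range m, H i / ((m : ℚ) - i) = H m ^ 2 - H2 m := by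
  induction m with
  | zero => simp [H, H2]
  | succ m ih =>
    have hshift : ∑ i ∈ range m, H (i + 1) / ((m : ℚ) - i) =
        H m ^ 2 - H2 m + 1 / ((m : ℚ) + 1) * (H m + H m) := by
      rw [sum_congr rfl fun i hi => H_succ_div_sub (mem_range.mp hi), sum_add_distrib, ih,
        ← mul_sum, sum_add_distrib, sum_range_one_div_sub, H]
    rw [sum_range_succ']
    push_cast
    simp only [add_sub_add_right_eq_sub, show H 0 = 0 from rfl, zero_div, add_zero]
    rw [hshift, H_succ, H2_succ]
    field_simp
    ring

lemma sum_Icc_two_H_div (m : ℕ) :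
    ∑ k ∈ Icc 2 (m + 1), H (m + 1 - k) / ((k : ℚ) - 1) = ∑ i ∈ range m, H i / ((m : ℚ) - i) := by
  refine sum_nbij' (fun k => m + 1 - k) (fun i => m + 1 - i) ?_ ?_ ?_ ?_ ?_ <;>
    intro k hk <;> simp only [mem_Icc, mem_range] at hk ⊢
  · omega
  · omega
  · omega
  · omega
  · rw [Nat.cast_sub hk.2]
    push_cast
    ring_nf

theorem stmt_15_general (n : ℕ) :
    ∑ k ∈ Finset.Icc 2 n, H (n - k) / ((k : ℚ) - 1) =
      H (n + 1) ^ 2 - H2 (n + 1)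
        - (2 * (2 * (n : ℚ) + 1) / ((n : ℚ) * ((n : ℚ) + 1))) * H (n + 1)
        + 2 * (3 * (n : ℚ) ^ 2 + 3 * (n : ℚ) + 1) / ((n : ℚ) ^ 2 * ((n : ℚ) + 1) ^ 2) := by
  rcases n with _ | m
  · simp [H, H2]
  · rw [sum_Icc_two_H_div, sum_range_H_div_sub, H_succ (m + 1), H_succ m, H2_succ (m + 1), H2_succ m]
    push_cast
    field_simp
    ring

theorem stmt_15 (n : ℕ) (hn : 2 ≤ n) :
    ∑ k ∈ Finset.Icc 2 n, H (n - k) / ((k : ℚ) - 1) =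
      H (n + 1) ^ 2 - H2 (n + 1)
        - (2 * (2 * (n : ℚ) + 1) / ((n : ℚ) * ((n : ℚ) + 1))) * H (n + 1)
        + 2 * (3 * (n : ℚ) ^ 2 + 3 * (n : ℚ) + 1) / ((n : ℚ) ^ 2 * ((n : ℚ) + 1) ^ 2) :=
  stmt_15_general n
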